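/- arXiv:math/0507023 — 7 statements merged into one kernel-verified Lean document; each statement's English description precedes it below -/
import Mathlib

section
/- For all real numbers x, y ≥ 0 and every real p ≥ 2, one has |x^p - y^p| ≤ p·|x - y|·√(x^(2p-2) + y^(2p-2)). -/
/-! Since `t ↦ t ^ p` is convex on `[0, ∞)` for `p ≥ 1`, each secant slope is at most the
derivative `p * a ^ (p - 1)` at the right endpoint `a = max x y`, and
`a ^ (p - 1) = √(a ^ (2p - 2)) ≤ √(x ^ (2p - 2) + y ^ (2p - 2))`. -/

open Real Set

lemma Real.rpow_sub_rpow_le_of_le {p a b : ℝ} (hp : 1 ≤ p) (hb : 0 ≤ b) (hba : b ≤ a) :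
    a ^ p - b ^ p ≤ p * a ^ (p - 1) * (a - b) := by
  rcases hba.eq_or_lt with rfl | hlt
  · simp
  have hslope : slope (fun t : ℝ ↦ t ^ p) b a ≤ p * a ^ (p - 1) :=
    (convexOn_rpow hp).slope_le_of_hasDerivAt (mem_Ici.2 hb) (mem_Ici.2 (hb.trans hba)) hlt
      (hasDerivAt_rpow_const (Or.inr hp))
  rw [slope_def_field, div_le_iff₀ (sub_pos.2 hlt)] at hslope
  exact hslope

lemma Real.rpow_sub_one_le_sqrt_add {p a c : ℝ} (ha : 0 ≤ a) (hc : 0 ≤ c) :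
    a ^ (p - 1) ≤ √(a ^ (2 * p - 2) + c) := by
  have hsq : (a ^ (p - 1)) ^ 2 = a ^ (2 * p - 2) := by
    rw [← rpow_mul_natCast ha]
    ring_nf
  exact le_sqrt_of_sq_le (by rw [hsq]; linarith)

lemma Real.rpow_sub_rpow_le_mul_sqrt {p a b : ℝ} (hp : 1 ≤ p) (hb : 0 ≤ b) (hba : b ≤ a) :
    a ^ p - b ^ p ≤ p * (a - b) * √(a ^ (2 * p - 2) + b ^ (2 * p - 2)) :=
  calc a ^ p - b ^ p ≤ p * a ^ (p - 1) * (a - b) := rpow_sub_rpow_le_of_le hp hb hba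
    _ = p * (a - b) * a ^ (p - 1) := by ring
    _ ≤ p * (a - b) * √(a ^ (2 * p - 2) + b ^ (2 * p - 2)) :=
      mul_le_mul_of_nonneg_left (rpow_sub_one_le_sqrt_add (hb.trans hba) (rpow_nonneg hb _))
        (mul_nonneg (by linarith) (sub_nonneg.2 hba))

theorem stmt0 (x y p : ℝ) (hx : 0 ≤ x) (hy : 0 ≤ y) (hp : 2 ≤ p) :
    |x ^ p - y ^ p| ≤ p * |x - y| * Real.sqrt (x ^ (2 * p - 2) + y ^ (2 * p - 2)) := by
  have hp1 : 1 ≤ p := by linarith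
  rcases le_total y x with hyx | hxy
  · rw [abs_of_nonneg (sub_nonneg.2 (rpow_le_rpow hy hyx (by linarith))),
      abs_of_nonneg (sub_nonneg.2 hyx)]
    exact rpow_sub_rpow_le_mul_sqrt hp1 hy hyx
  · rw [abs_sub_comm, abs_of_nonneg (sub_nonneg.2 (rpow_le_rpow hx hxy (by linarith))),
      abs_sub_comm, abs_of_nonneg (sub_nonneg.2 hxy), add_comm]
    exact rpow_sub_rpow_le_mul_sqrt hp1 hx hxy
end

section
/- Let p ≥ 2 and define f(s,t) = |s - t|·√(|s|^(2p-2) + |t|^(2p-2)) for real s, t. Then for any finite sequence of real numbers r_1, …, r_N, one has f(r_1, r_N) ≤ 2p · Σ_{i=1}^{N-1} f(r_i, r_{i+1}). -/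
open Real Finset

-- Bernoulli-type tangent line inequality: for 0 ≤ t ≤ s, q ≥ 1:
-- s^q * s - t^q * t ≤ (q+1) * ((s-t) * s^q)
private lemma bern {q s t : ℝ} (hq : 1 ≤ q) (ht : 0 ≤ t) (hts : t ≤ s) :
    s ^ q * s - t ^ q * t ≤ (q + 1) * ((s - t) * s ^ q) := by
  have hs : 0 ≤ s := ht.trans hts
  rcases eq_or_lt_of_le hs with hs0 | hs0
  · have ht0 : t = 0 := le_antisymm (by rw [← hs0] at hts; exact hts) ht
    rw [← hs0, ht0]
    simp
  · have h1 : (-1 : ℝ) ≤ t / s - 1 := by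
      have : 0 ≤ t / s := div_nonneg ht hs0.le
      linarith
    have hb := one_add_mul_self_le_rpow_one_add h1 (by linarith : (1:ℝ) ≤ q + 1)
    rw [show (1 : ℝ) + (t / s - 1) = t / s by ring] at hb
    rw [Real.div_rpow ht hs0.le] at hb
    have hsq : (0:ℝ) < s ^ (q+1) := Real.rpow_pos_of_pos hs0 _
    have hsadd : s ^ (q+1) = s ^ q * s := Real.rpow_add_one hs0.ne' q
    have htadd : t ^ (q+1) = t ^ q * t := by
      rcases eq_or_lt_of_le ht with ht0 | ht0
      · rw [← ht0, Real.zero_rpow (by positivity : q + 1 ≠ 0),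
          Real.zero_rpow (by positivity : q ≠ 0)]
        ring
      · exact Real.rpow_add_one ht0.ne' q
    have hb2 : s ^ (q+1) + (q+1) * (s ^ q * (t - s)) ≤ t ^ (q+1) := by
      have e : s ^ (q+1) * (1 + (q+1) * (t/s - 1)) = s ^ (q+1) + (q+1) * (s ^ q * (t - s)) := by
        rw [hsadd]; field_simp
      calc s ^ (q+1) + (q+1) * (s ^ q * (t - s)) = s ^ (q+1) * (1 + (q+1) * (t/s - 1)) := e.symm
        _ ≤ s ^ (q+1) * (t ^ (q+1) / s ^ (q+1)) := mul_le_mul_of_nonneg_left hb hsq.le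
        _ = t ^ (q+1) := by field_simp
    rw [hsadd, htadd] at hb2
    nlinarith [hb2]

private lemma sq_le_sqrt {a b : ℝ} (ha : 0 ≤ a) (hb : 0 ≤ b) :
    a ≤ Real.sqrt (a ^ 2 + b ^ 2) := by
  have h := Real.sqrt_le_sqrt (show a ^ 2 ≤ a ^ 2 + b ^ 2 by nlinarith)
  rwa [Real.sqrt_sq ha] at h

private lemma sqrt_le_add {a b : ℝ} (ha : 0 ≤ a) (hb : 0 ≤ b) :
    Real.sqrt (a ^ 2 + b ^ 2) ≤ a + b := by
  have h := Real.sqrt_le_sqrt (show a ^ 2 + b ^ 2 ≤ (a + b) ^ 2 by nlinarith)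
  rwa [Real.sqrt_sq (by linarith : (0:ℝ) ≤ a + b)] at h

-- core lemma 1: f s t ≤ 2 (g s - g t) when 0 ≤ s, |t| ≤ s
private lemma core1 {q s t : ℝ} (hq : 1 ≤ q) (hs : 0 ≤ s) (hts : |t| ≤ s) :
    |s - t| * Real.sqrt ((|s| ^ q) ^ 2 + (|t| ^ q) ^ 2) ≤
      2 * (|s| ^ q * s - |t| ^ q * t) := by
  have ht1 : t ≤ s := (le_abs_self t).trans hts
  have ht2 : -s ≤ t := by
    have := neg_abs_le t; linarith
  have hA : 0 ≤ |s| ^ q := Real.rpow_nonneg (abs_nonneg s) q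
  have hB : 0 ≤ |t| ^ q := Real.rpow_nonneg (abs_nonneg t) q
  have hBA : |t| ^ q ≤ |s| ^ q := Real.rpow_le_rpow (abs_nonneg t) (hts.trans_eq (abs_of_nonneg hs).symm) (by linarith)
  have h1 : |s - t| = s - t := abs_of_nonneg (by linarith)
  have h2 : Real.sqrt ((|s| ^ q) ^ 2 + (|t| ^ q) ^ 2) ≤ |s| ^ q + |t| ^ q := sqrt_le_add hA hB
  calc |s - t| * Real.sqrt ((|s| ^ q) ^ 2 + (|t| ^ q) ^ 2)
      ≤ (s - t) * (|s| ^ q + |t| ^ q) := by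
        rw [h1]; exact mul_le_mul_of_nonneg_left h2 (by linarith)
    _ ≤ 2 * (|s| ^ q * s - |t| ^ q * t) := by
        rw [abs_of_nonneg hs] at hBA ⊢
        nlinarith [mul_le_mul_of_nonneg_right hBA (by linarith : (0:ℝ) ≤ s + t)]

-- core lemma 2: g s - g t ≤ (q+1) * f s t when 0 ≤ s, |t| ≤ s
private lemma core2 {q s t : ℝ} (hq : 1 ≤ q) (hs : 0 ≤ s) (hts : |t| ≤ s) :
    |s| ^ q * s - |t| ^ q * t ≤
      (q + 1) * (|s - t| * Real.sqrt ((|s| ^ q) ^ 2 + (|t| ^ q) ^ 2)) := by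
  have ht1 : t ≤ s := (le_abs_self t).trans hts
  have ht2 : -s ≤ t := by have := neg_abs_le t; linarith
  have hA : 0 ≤ |s| ^ q := Real.rpow_nonneg (abs_nonneg s) q
  have hB : 0 ≤ |t| ^ q := Real.rpow_nonneg (abs_nonneg t) q
  have hBA : |t| ^ q ≤ |s| ^ q := Real.rpow_le_rpow (abs_nonneg t) (hts.trans_eq (abs_of_nonneg hs).symm) (by linarith)
  have h1 : |s - t| = s - t := abs_of_nonneg (by linarith)
  have h2 : |s| ^ q ≤ Real.sqrt ((|s| ^ q) ^ 2 + (|t| ^ q) ^ 2) := sq_le_sqrt hA hB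
  have hq1 : (0:ℝ) ≤ q + 1 := by linarith
  have hstep : (q + 1) * ((s - t) * |s| ^ q) ≤
      (q + 1) * (|s - t| * Real.sqrt ((|s| ^ q) ^ 2 + (|t| ^ q) ^ 2)) := by
    rw [h1]
    exact mul_le_mul_of_nonneg_left (mul_le_mul_of_nonneg_left h2 (by linarith)) hq1
  refine le_trans ?_ hstep
  rcases le_total 0 t with ht0 | ht0
  · rw [abs_of_nonneg hs, abs_of_nonneg ht0]
    exact bern hq ht0 ht1
  · -- t ≤ 0 : easy estimate
    rw [abs_of_nonneg hs] at hA hBA ⊢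
    rw [abs_of_nonpos ht0] at hBA ⊢
    nlinarith [mul_le_mul_of_nonneg_right hBA (by linarith : (0:ℝ) ≤ -t),
      mul_nonneg hA hs, mul_nonneg hA (by linarith : (0:ℝ) ≤ -t),
      mul_nonneg (mul_nonneg (by linarith : (0:ℝ) ≤ q) (by linarith : (0:ℝ) ≤ s - t)) hA]

-- combined general lemma for all s t
private lemma gkey {q : ℝ} (hq : 1 ≤ q) (s t : ℝ) :
    |s - t| * Real.sqrt ((|s| ^ q) ^ 2 + (|t| ^ q) ^ 2) ≤
        2 * |(|s| ^ q * s) - (|t| ^ q * t)| ∧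
      |(|s| ^ q * s) - (|t| ^ q * t)| ≤
        (q + 1) * (|s - t| * Real.sqrt ((|s| ^ q) ^ 2 + (|t| ^ q) ^ 2)) := by
  have base : ∀ s t : ℝ, 0 ≤ s → |t| ≤ s →
      |s - t| * Real.sqrt ((|s| ^ q) ^ 2 + (|t| ^ q) ^ 2) ≤
          2 * |(|s| ^ q * s) - (|t| ^ q * t)| ∧
        |(|s| ^ q * s) - (|t| ^ q * t)| ≤
          (q + 1) * (|s - t| * Real.sqrt ((|s| ^ q) ^ 2 + (|t| ^ q) ^ 2)) := by
    intro s t hs hts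
    have h1 := core1 hq hs hts
    have h2 := core2 hq hs hts
    have hfnn : 0 ≤ |s - t| * Real.sqrt ((|s| ^ q) ^ 2 + (|t| ^ q) ^ 2) :=
      mul_nonneg (abs_nonneg _) (Real.sqrt_nonneg _)
    have hd : 0 ≤ |s| ^ q * s - |t| ^ q * t := by linarith
    rw [abs_of_nonneg hd]
    exact ⟨h1, h2⟩
  -- symmetry reductions
  have hsymm : ∀ s t : ℝ,
      (|s - t| * Real.sqrt ((|s| ^ q) ^ 2 + (|t| ^ q) ^ 2)
        = |t - s| * Real.sqrt ((|t| ^ q) ^ 2 + (|s| ^ q) ^ 2)) ∧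
      (|(|s| ^ q * s) - (|t| ^ q * t)| = |(|t| ^ q * t) - (|s| ^ q * s)|) := by
    intro s t
    constructor
    · rw [abs_sub_comm, add_comm]
    · rw [abs_sub_comm]
  have hneg : ∀ s t : ℝ,
      (|s - t| * Real.sqrt ((|s| ^ q) ^ 2 + (|t| ^ q) ^ 2)
        = |(-s) - (-t)| * Real.sqrt ((|(-s)| ^ q) ^ 2 + (|(-t)| ^ q) ^ 2)) ∧
      (|(|s| ^ q * s) - (|t| ^ q * t)| = |(|(-s)| ^ q * (-s)) - (|(-t)| ^ q * (-t))|) := by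
    intro s t
    rw [abs_neg, abs_neg, show (-s) - (-t) = -(s - t) by ring, abs_neg]
    refine ⟨rfl, ?_⟩
    rw [show |s| ^ q * (-s) - |t| ^ q * (-t) = -(|s| ^ q * s - |t| ^ q * t) by ring, abs_neg]
  rcases le_total |t| |s| with h | h
  · rcases le_total 0 s with hs | hs
    · exact base s t hs (h.trans_eq (abs_of_nonneg hs))
    · have := base (-s) (-t) (by linarith) (by rw [abs_neg]; rw [abs_of_nonpos hs] at h; exact h.trans (le_refl _))
      rw [(hneg s t).1, (hneg s t).2]
      exact this
  · rcases le_total 0 t with ht | ht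
    · have := base t s ht (h.trans_eq (abs_of_nonneg ht))
      rw [(hsymm s t).1, (hsymm s t).2]
      exact this
    · have := base (-t) (-s) (by linarith) (by rw [abs_neg]; rw [abs_of_nonpos ht] at h; exact h)
      rw [(hsymm s t).1, (hsymm s t).2, (hneg t s).1, (hneg t s).2]
      exact this

theorem stmt1 (p : ℝ) (hp : 2 ≤ p) (f : ℝ → ℝ → ℝ)
    (hf : ∀ s t : ℝ, f s t = |s - t| * Real.sqrt (|s| ^ (2 * p - 2) + |t| ^ (2 * p - 2)))
    (N : ℕ) (hN : 1 ≤ N) (r : ℕ → ℝ) :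
    f (r 0) (r (N - 1)) ≤ 2 * p * ∑ i ∈ Finset.range (N - 1), f (r i) (r (i + 1)) := by
  set q : ℝ := p - 1 with hqdef
  have hq : 1 ≤ q := by simp [hqdef]; linarith
  have hexp : ∀ x : ℝ, |x| ^ (2 * p - 2) = (|x| ^ q) ^ 2 := by
    intro x
    rw [← Real.rpow_natCast (|x| ^ q) 2, ← Real.rpow_mul (abs_nonneg x)]
    norm_num [hqdef]
    ring_nf
  have hf' : ∀ s t : ℝ, f s t = |s - t| * Real.sqrt ((|s| ^ q) ^ 2 + (|t| ^ q) ^ 2) := by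
    intro s t; rw [hf, hexp, hexp]
  set G : ℕ → ℝ := fun i => |r i| ^ q * (r i) with hG
  have key1 : ∀ s t : ℝ, f s t ≤ 2 * |(|s| ^ q * s) - (|t| ^ q * t)| := by
    intro s t; rw [hf']; exact (gkey hq s t).1
  have key2 : ∀ s t : ℝ, |(|s| ^ q * s) - (|t| ^ q * t)| ≤ p * f s t := by
    intro s t; rw [hf']
    have := (gkey hq s t).2
    have : q + 1 = p := by simp [hqdef]
    rw [← this]
    exact (gkey hq s t).2
  have htel : |G (N - 1) - G 0| ≤ ∑ i ∈ Finset.range (N - 1), |G (i + 1) - G i| := by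
    rw [← Finset.sum_range_sub G (N - 1)]
    exact Finset.abs_sum_le_sum_abs _ _
  have hfnn : ∀ i, |G (i + 1) - G i| ≤ p * f (r i) (r (i + 1)) := by
    intro i
    rw [abs_sub_comm]
    exact key2 (r i) (r (i + 1))
  calc f (r 0) (r (N - 1)) ≤ 2 * |(|r 0| ^ q * r 0) - (|r (N-1)| ^ q * r (N-1))| :=
        key1 _ _
    _ = 2 * |G (N - 1) - G 0| := by rw [abs_sub_comm]
    _ ≤ 2 * ∑ i ∈ Finset.range (N - 1), |G (i + 1) - G i| := by linarith [htel]
    _ ≤ 2 * ∑ i ∈ Finset.range (N - 1), p * f (r i) (r (i + 1)) := by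
        have h := Finset.sum_le_sum (s := Finset.range (N-1)) (fun i _ => hfnn i)
        linarith
    _ = 2 * p * ∑ i ∈ Finset.range (N - 1), f (r i) (r (i + 1)) := by
        rw [← Finset.mul_sum]; ring
end

section
/- Let p ≥ 2 and define f(s,t) = |s - t|·√(|s|^(2p-2) + |t|^(2p-2)) for real s, t. Then for all real r, s, t: f(r, (s+t)/2)^2 ≤ (f(r,s)^2 + f(r,t)^2)/2. -/
set_option linter.unusedVariables false
set_option linter.unreachableTactic false
set_option linter.unnecessarySeqFocus false
set_option linter.unusedTactic false

private lemma Qkey' (q x c A : ℝ) (hq : 2 ≤ q) (hA : x^2 ≤ A) :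
    0 ≤ 2*A^2 + 2*q*((2*x-c)*(x-c))*A + q*(q-2)*x^2*(x-c)^2 := by
  have hq0 : (0:ℝ) < q := by linarith
  have hA0 : 0 ≤ A := le_trans (sq_nonneg x) hA
  rcases le_or_gt 0 ((2*x-c)*(x-c)) with hS | hS
  · nlinarith [sq_nonneg A, mul_nonneg (mul_nonneg hq0.le hS) hA0,
      mul_nonneg (mul_nonneg (mul_nonneg hq0.le (by linarith : (0:ℝ) ≤ q-2)) (sq_nonneg x)) (sq_nonneg (x-c))]
  · rcases le_or_gt (q*((2*x-c)*(c-x))/2) (x^2) with hA' | hA'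
    · nlinarith [mul_nonneg (sub_nonneg.2 hA)
        (by nlinarith : (0:ℝ) ≤ A + x^2 + q*((2*x-c)*(x-c))),
        mul_nonneg (sq_nonneg x)
        (by nlinarith [sq_nonneg ((q^2+2*q+2)*x - q*(q+1)*c), sq_nonneg (q*c)] :
          (0:ℝ) ≤ (q^2+2*q+2)*x^2 - 2*q*(q+1)*c*x + q^2*c^2)]
    · have hW : (0:ℝ) ≤ 2*(q-2)*x^2 - q*(2*x-c)^2 := by
        nlinarith [mul_nonneg hq0.le (add_nonneg (sq_nonneg x) (sq_nonneg (x-c)))]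
      nlinarith [sq_nonneg (2*A - q*((2*x-c)*(c-x))),
        mul_nonneg (mul_nonneg hq0.le (sq_nonneg (x-c))) hW]

private lemma tangent' (q A B : ℝ) (hq : 2 ≤ q) (hA : 0 < A) (hB : 0 < B) :
    A^(q/2) + (q/2) * A^(q/2-1) * (B - A) ≤ B^(q/2) := by
  have hz : (-1:ℝ) ≤ (B - A)/A := by
    rw [le_div_iff₀ hA]; linarith
  have h1 : 1 + (q/2) * ((B - A)/A) ≤ (1 + (B - A)/A)^(q/2) :=
    one_add_mul_self_le_rpow_one_add hz (by linarith)
  have h2 : 1 + (B - A)/A = B/A := by field_simp; ring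
  rw [h2] at h1
  have h3 : (B/A)^(q/2) = B^(q/2) / A^(q/2) := Real.div_rpow hB.le hA.le _
  rw [h3] at h1
  have hAp : (0:ℝ) < A^(q/2) := Real.rpow_pos_of_pos hA _
  have h4 : A^(q/2) * (1 + (q/2) * ((B - A)/A)) ≤ A^(q/2) * (B^(q/2)/A^(q/2)) :=
    mul_le_mul_of_nonneg_left h1 hAp.le
  have h5 : A^(q/2) * (B^(q/2)/A^(q/2)) = B^(q/2) := by field_simp
  have h6 : A^(q/2-1) = A^(q/2) / A := by
    rw [Real.rpow_sub hA, Real.rpow_one]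
  rw [h5] at h4
  have hAne : A ≠ 0 := hA.ne'
  calc A^(q/2) + q/2 * A^(q/2-1) * (B - A)
      = A^(q/2) * (1 + q/2 * ((B - A)/A)) := by rw [h6]; field_simp
    _ ≤ B^(q/2) := h4

private lemma Epos' (q e c x : ℝ) (hq : 2 ≤ q) (he : 0 < e) :
    0 ≤ 2*((c^2+e)^(q/2) + (x^2+e)^(q/2)) + 4*(x-c)*(q*x*(x^2+e)^(q/2-1))
      + (x-c)^2*(q*(x^2+e)^(q/2-1) + q*(q-2)*x^2*(x^2+e)^(q/2-2)) := by
  set A := x^2 + e with hAdef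
  set B := c^2 + e with hBdef
  have hA : 0 < A := by positivity
  have hB : 0 < B := by positivity
  have hT : 0 ≤ A^(q/2-2) := Real.rpow_nonneg hA.le _
  have e1 : A^(q/2) = A^2 * A^(q/2-2) := by
    rw [← Real.rpow_natCast A 2, ← Real.rpow_add hA]
    norm_num
  have e2 : A^(q/2-1) = A * A^(q/2-2) := by
    nth_rewrite 1 [show q/2-1 = 1 + (q/2-2) by ring]
    rw [Real.rpow_add hA, Real.rpow_one]
  have htan := tangent' q A B hq hA hB
  have hQ := Qkey' q x c A hq (by linarith)
  have key : 0 ≤ A^(q/2-2) *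
      (4*A^2 + q*A*(B-A) + 4*q*x*(x-c)*A + q*(x-c)^2*A + q*(q-2)*x^2*(x-c)^2) := by
    apply mul_nonneg hT
    have hBA : B - A = c^2 - x^2 := by rw [hAdef, hBdef]; ring
    rw [hBA]
    nlinarith [sq_nonneg A]
  have expand : 2*((c^2+e)^(q/2) + (x^2+e)^(q/2)) + 4*(x-c)*(q*x*(x^2+e)^(q/2-1))
      + (x-c)^2*(q*(x^2+e)^(q/2-1) + q*(q-2)*x^2*(x^2+e)^(q/2-2))
      = 2*(B^(q/2) - (A^(q/2) + q/2 * A^(q/2-1) * (B-A)))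
      + A^(q/2-2) * (4*A^2 + q*A*(B-A) + 4*q*x*(x-c)*A + q*(x-c)^2*A
          + q*(q-2)*x^2*(x-c)^2) := by
    rw [e1, e2]; ring
  rw [expand]
  have : 0 ≤ B^(q/2) - (A^(q/2) + q/2 * A^(q/2-1) * (B-A)) := by linarith
  linarith

private lemma convex_lemma' (q e c : ℝ) (hq : 2 ≤ q) (he : 0 < e) :
    ConvexOn ℝ Set.univ
      (fun x : ℝ => (x-c)^2 * ((c^2+e)^(q/2) + (x^2+e)^(q/2))) := by
  have Epos := fun x => Epos' q e c x hq he
  set K := (c^2+e)^(q/2) with hK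
  set g : ℝ → ℝ := fun x => (x-c)^2 * (K + (x^2+e)^(q/2)) with hg
  set g' : ℝ → ℝ := fun x => 2*(x-c) * (K + (x^2+e)^(q/2))
      + (x-c)^2 * (q*x*(x^2+e)^(q/2-1)) with hg'
  set g'' : ℝ → ℝ := fun x => 2*(K + (x^2+e)^(q/2)) + 4*(x-c)*(q*x*(x^2+e)^(q/2-1))
      + (x-c)^2*(q*(x^2+e)^(q/2-1) + q*(q-2)*x^2*(x^2+e)^(q/2-2)) with hg''
  have hbase : ∀ x : ℝ, HasDerivAt (fun y : ℝ => y^2 + e) (2*x) x := by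
    intro x
    simpa using (hasDerivAt_pow 2 x).add_const e
  have hAne : ∀ x : ℝ, x^2 + e ≠ 0 := by intro x; positivity
  have hw : ∀ x : ℝ, HasDerivAt (fun y : ℝ => (y^2+e)^(q/2))
      (q*x*(x^2+e)^(q/2-1)) x := by
    intro x
    have := (hbase x).rpow_const (p := q/2) (Or.inl (hAne x))
    convert this using 1
    ring
  have hw' : ∀ x : ℝ, HasDerivAt (fun y : ℝ => q*y*(y^2+e)^(q/2-1))
      (q*(x^2+e)^(q/2-1) + q*(q-2)*x^2*(x^2+e)^(q/2-2)) x := by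
    intro x
    have h1 := (hbase x).rpow_const (p := q/2-1) (Or.inl (hAne x))
    rw [show q/2-1-1 = q/2-2 by ring] at h1
    have h2 := (hasDerivAt_id x).fun_mul h1
    have h3 := h2.const_mul q
    have heq : (fun y : ℝ => q*y*(y^2+e)^(q/2-1))
        = fun y : ℝ => q * (y * (y^2+e)^(q/2-1)) := by
      funext y; ring
    rw [heq]
    convert h3 using 1
    · rfl
    · rfl
    · simp only [id_eq]
    · simp only [id_eq]; ring
  have hsq : ∀ x : ℝ, HasDerivAt (fun y : ℝ => (y-c)^2) (2*(x-c)) x := by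
    intro x
    have := ((hasDerivAt_id x).sub_const c).fun_pow 2
    simpa using this
  have hgd : ∀ x : ℝ, HasDerivAt g (g' x) x := by
    intro x
    have := (hsq x).fun_mul ((hw x).const_add K)
    convert this using 1 <;> · simp only [hg', id_eq]; ring
  have hgd' : ∀ x : ℝ, HasDerivAt g' (g'' x) x := by
    intro x
    have h1 : HasDerivAt (fun y : ℝ => 2*(y-c) * (K + (y^2+e)^(q/2)))
        (2 * (K + (x^2+e)^(q/2)) + 2*(x-c) * (q*x*(x^2+e)^(q/2-1))) x := by
      have ha : HasDerivAt (fun y : ℝ => 2*(y-c)) 2 x := by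
        simpa using ((hasDerivAt_id x).sub_const c).const_mul 2
      simpa using ha.fun_mul ((hw x).const_add K)
    have h2 : HasDerivAt (fun y : ℝ => (y-c)^2 * (q*y*(y^2+e)^(q/2-1)))
        (2*(x-c) * (q*x*(x^2+e)^(q/2-1)) + (x-c)^2 *
          (q*(x^2+e)^(q/2-1) + q*(q-2)*x^2*(x^2+e)^(q/2-2))) x :=
      (hsq x).fun_mul (hw' x)
    have := h1.fun_add h2
    convert this using 1
    · rfl
    · rfl
    · simp only [hg'', id_eq]; ring
  apply convexOn_of_hasDerivWithinAt2_nonneg (f' := g') (f'' := g'') convex_univ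
  · exact (Continuous.continuousOn (by
      exact continuous_iff_continuousAt.2 fun x => (hgd x).continuousAt))
  · intro x _; exact (hgd x).hasDerivWithinAt
  · intro x _; exact (hgd' x).hasDerivWithinAt
  · intro x _
    simpa [hg''] using Epos x

theorem stmt2 (p : ℝ) (hp : 2 ≤ p) (f : ℝ → ℝ → ℝ)
    (hf : ∀ s t : ℝ, f s t = |s - t| * Real.sqrt (|s| ^ (2 * p - 2) + |t| ^ (2 * p - 2)))
    (r s t : ℝ) :
    f r ((s + t) / 2) ^ 2 ≤ (f r s ^ 2 + f r t ^ 2) / 2 := by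
  set q : ℝ := 2 * p - 2 with hqdef
  have hq : 2 ≤ q := by simp only [hqdef]; linarith
  set m : ℝ := (s + t) / 2 with hm
  -- rewrite the squares
  have hsq : ∀ a b : ℝ, f a b ^ 2 = (a - b)^2 * (|a| ^ q + |b| ^ q) := by
    intro a b
    rw [hf a b, mul_pow, sq_abs, Real.sq_sqrt (by positivity)]
  rw [hsq, hsq, hsq]
  -- express |x|^q as (x^2+0)^(q/2)
  have habs : ∀ x : ℝ, |x| ^ q = (x^2 + 0)^(q/2) := by
    intro x
    rw [add_zero, ← sq_abs, ← Real.rpow_natCast |x| 2,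
      ← Real.rpow_mul (abs_nonneg x)]
    norm_num
    congr 1
    ring
  -- the ε-family inequality
  have key : ∀ e : ℝ, 0 < e →
      (m - r)^2 * ((r^2+e)^(q/2) + (m^2+e)^(q/2)) ≤
        ((s - r)^2 * ((r^2+e)^(q/2) + (s^2+e)^(q/2))
          + (t - r)^2 * ((r^2+e)^(q/2) + (t^2+e)^(q/2))) / 2 := by
    intro e he
    have hconv := convex_lemma' q e r hq he
    have h := hconv.2 (Set.mem_univ s) (Set.mem_univ t)
      (by norm_num : (0:ℝ) ≤ 1/2) (by norm_num : (0:ℝ) ≤ 1/2) (by norm_num)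
    simp only [smul_eq_mul] at h
    have hmid : (1/2 : ℝ) * s + (1/2 : ℝ) * t = m := by rw [hm]; ring
    rw [hmid] at h
    calc (m - r)^2 * ((r^2+e)^(q/2) + (m^2+e)^(q/2))
        = (m - r)^2 * ((r^2+e)^(q/2) + (m^2+e)^(q/2)) := rfl
      _ ≤ _ := by
          have : (m - r)^2 = (m - r)^2 := rfl
          nlinarith [h]
  -- limit e → 0+
  set L : ℝ → ℝ := fun e =>
    ((s - r)^2 * ((r^2+e)^(q/2) + (s^2+e)^(q/2))
      + (t - r)^2 * ((r^2+e)^(q/2) + (t^2+e)^(q/2))) / 2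
    - (m - r)^2 * ((r^2+e)^(q/2) + (m^2+e)^(q/2)) with hL
  have hcont : ∀ x : ℝ, ContinuousAt (fun e : ℝ => (x^2+e)^(q/2)) 0 := by
    intro x
    apply ContinuousAt.rpow_const
    · exact (continuous_const.add continuous_id).continuousAt
    · right; positivity
  have hLcont : ContinuousAt L 0 := by
    apply ContinuousAt.sub
    · apply ContinuousAt.div_const
      apply ContinuousAt.add
      · exact (continuousAt_const.mul ((hcont r).add (hcont s)))
      · exact (continuousAt_const.mul ((hcont r).add (hcont t)))
    · exact (continuousAt_const.mul ((hcont r).add (hcont m)))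
  have hlim : Filter.Tendsto L (nhdsWithin 0 (Set.Ioi 0)) (nhds (L 0)) :=
    (hLcont.continuousWithinAt).tendsto
  have hpos : ∀ᶠ e in nhdsWithin 0 (Set.Ioi (0:ℝ)), 0 ≤ L e := by
    filter_upwards [self_mem_nhdsWithin] with e he
    have := key e he
    simp only [hL]
    linarith
  have hL0 : 0 ≤ L 0 := ge_of_tendsto hlim hpos
  simp only [hL] at hL0
  have hr := habs r
  have hs := habs s
  have ht := habs t
  have hmm := habs m
  rw [hr, hs, ht, hmm]
  have e1 : (r - m)^2 = (m - r)^2 := by ring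
  have e2 : (r - s)^2 = (s - r)^2 := by ring
  have e3 : (r - t)^2 = (t - r)^2 := by ring
  rw [e1, e2, e3]
  linarith
end

section
/- For every real p ≥ 2, the function v ↦ (1 - v)^2 · (1 + |v|^(2p-2)) is convex on ℝ. -/
open Set

theorem stmt3 (p : ℝ) (hp : 2 ≤ p) :
    ConvexOn ℝ Set.univ (fun v : ℝ => (1 - v) ^ 2 * (1 + |v| ^ (2 * p - 2))) := by
  have hp1 : (1:ℝ) ≤ p - 1 := by linarith
  set f : ℝ → ℝ := fun v => (1 - v) ^ 2 * (1 + (v ^ 2) ^ (p - 1)) with hf_def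
  set f' : ℝ → ℝ := fun v =>
    -2 * (1 - v) * (1 + (v ^ 2) ^ (p - 1)) + (1 - v) ^ 2 * ((p - 1) * (v ^ 2) ^ (p - 2) * (2 * v))
    with hf'_def
  set f'' : ℝ → ℝ := fun v =>
    2 + 2 * (v ^ 2) ^ (p - 1) - 8 * (p - 1) * v * (1 - v) * (v ^ 2) ^ (p - 2)
      + (p - 1) * (4 * p - 6) * (1 - v) ^ 2 * (v ^ 2) ^ (p - 2) with hf''_def
  -- the target function equals f
  have hEq : (fun v : ℝ => (1 - v) ^ 2 * (1 + |v| ^ (2 * p - 2))) = f := by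
    funext v
    have h1 : |v| ^ (2 * p - 2) = (v ^ 2) ^ (p - 1) := by
      rw [show (2 * p - 2 : ℝ) = (2 : ℝ) * (p - 1) by ring,
        Real.rpow_mul (abs_nonneg v)]
      congr 1
      rw [show ((2:ℝ)) = ((2:ℕ):ℝ) by norm_num, Real.rpow_natCast, sq_abs]
    rw [h1]
  -- first derivative
  have hsq : ∀ v : ℝ, HasDerivAt (fun x : ℝ => x ^ 2) (2 * v) v := by
    intro v
    simpa using (hasDerivAt_id v).fun_pow 2
  have h1mv : ∀ v : ℝ, HasDerivAt (fun x : ℝ => 1 - x) (-1) v := fun v =>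
    (hasDerivAt_id v).const_sub 1
  have h1mv2 : ∀ v : ℝ, HasDerivAt (fun x : ℝ => (1 - x) ^ 2) (2 * (1 - v) * (-1)) v := by
    intro v
    simpa using (h1mv v).fun_pow 2
  have hB : ∀ v : ℝ, HasDerivAt (fun x : ℝ => (x ^ 2) ^ (p - 1))
      (2 * v * ((p - 1) * (v ^ 2) ^ (p - 2))) v := by
    intro v
    have := (hsq v).rpow_const (p := p - 1) (Or.inr hp1)
    rw [show p - 1 - 1 = p - 2 by ring] at this
    convert this using 1
    ring
  have hderiv : ∀ v : ℝ, HasDerivAt f (f' v) v := by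
    intro v
    have t3 := (h1mv2 v).fun_mul ((hB v).const_add 1)
    refine t3.congr_deriv ?_
    simp only [hf'_def]
    ring
  -- second derivative away from 0
  have hderiv2 : ∀ v : ℝ, v ≠ 0 → HasDerivAt f' (f'' v) v := by
    intro v hv
    have hv2 : (v : ℝ) ^ 2 ≠ 0 := pow_ne_zero 2 hv
    have hA : HasDerivAt (fun x : ℝ => (x ^ 2) ^ (p - 2))
        (2 * v * ((p - 2) * (v ^ 2) ^ (p - 3))) v := by
      have := (hsq v).rpow_const (p := p - 2) (Or.inl hv2)
      rw [show p - 2 - 1 = p - 3 by ring] at this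
      convert this using 1
      ring
    have t1 : HasDerivAt (fun x : ℝ => -2 * (1 - x)) 2 v := by
      simpa using (h1mv v).const_mul (-2)
    have t3 := t1.fun_mul ((hB v).const_add 1)
    have u1 := hA.const_mul (p - 1)
    have u2 : HasDerivAt (fun x : ℝ => 2 * x) 2 v := by
      simpa using (hasDerivAt_id v).const_mul 2
    have t5 := (u1.fun_mul u2)
    have t6 := (h1mv2 v).fun_mul t5
    have final := t3.fun_add t6
    refine final.congr_deriv ?_
    have hsub : (v ^ 2 : ℝ) ^ (p - 2) = (v ^ 2) ^ (p - 3) * v ^ 2 := by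
      rw [show p - 2 = p - 3 + 1 by ring, Real.rpow_add_one hv2]
    simp only [hf''_def]
    rw [hsub]
    ring
  -- value at 0
  have hf'0 : f' 0 = -2 := by
    simp only [hf'_def]
    norm_num [Real.zero_rpow (show p - 1 ≠ 0 by linarith)]
  -- bound on the left
  have hneg : ∀ x : ℝ, x ≤ 0 → f' x ≤ -2 := by
    intro x hx
    have hA : 0 ≤ (x ^ 2) ^ (p - 2) := Real.rpow_nonneg (sq_nonneg x) _
    have hB0 : 0 ≤ (x ^ 2) ^ (p - 1) := Real.rpow_nonneg (sq_nonneg x) _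
    simp only [hf'_def]
    nlinarith [mul_nonneg (mul_nonneg (sq_nonneg (1 - x)) hA) (by linarith : (0:ℝ) ≤ p - 1),
      mul_nonneg hB0 (neg_nonneg.mpr hx), sq_nonneg (1 - x)]
  -- bound on the right
  have hpos : ∀ y : ℝ, 0 ≤ y → -2 ≤ f' y := by
    intro y hy
    rcases eq_or_lt_of_le hy with h | h
    · rw [← h, hf'0]
    · have hy2 : (0:ℝ) < y ^ 2 := by positivity
      have hBA : (y ^ 2) ^ (p - 1) = (y ^ 2) ^ (p - 2) * y ^ 2 := by
        rw [show p - 1 = p - 2 + 1 by ring, Real.rpow_add_one (ne_of_gt hy2)]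
      have hA : 0 ≤ (y ^ 2) ^ (p - 2) := Real.rpow_nonneg (sq_nonneg y) _
      simp only [hf'_def, hBA]
      rcases le_or_gt y 1 with h1 | h1
      · have hA1 : (y ^ 2) ^ (p - 2) ≤ 1 :=
          Real.rpow_le_one (sq_nonneg y) (by nlinarith) (by linarith)
        nlinarith [mul_nonneg (sub_nonneg.2 hA1) (mul_nonneg h.le (sub_nonneg.2 h1)),
          mul_nonneg (mul_nonneg hA h.le) (sq_nonneg (1 - y)),
          mul_nonneg hA (mul_nonneg h.le (sub_nonneg.2 h1))]
      · nlinarith [mul_nonneg (mul_nonneg hA (by nlinarith : (0:ℝ) ≤ y ^ 2 * (y - 1))) h.le,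
          mul_nonneg (mul_nonneg (mul_nonneg hA h.le) (sq_nonneg (1 - y)))
            (by linarith : (0:ℝ) ≤ p - 1)]
  -- second derivative nonneg on the left
  have h2neg : ∀ v : ℝ, v < 0 → 0 ≤ f'' v := by
    intro v hv
    have hA : 0 ≤ (v ^ 2) ^ (p - 2) := Real.rpow_nonneg (sq_nonneg v) _
    have hB0 : 0 ≤ (v ^ 2) ^ (p - 1) := Real.rpow_nonneg (sq_nonneg v) _
    simp only [hf''_def]
    nlinarith [mul_nonneg (mul_nonneg (mul_nonneg (by linarith : (0:ℝ) ≤ p - 1) hA)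
        (by linarith : (0:ℝ) ≤ -v)) (by linarith : (0:ℝ) ≤ 1 - v),
      mul_nonneg (mul_nonneg (mul_nonneg (by nlinarith : (0:ℝ) ≤ (p - 1) * (4 * p - 6))
        (sq_nonneg (1 - v))) hA) (le_refl (0:ℝ)),
      mul_nonneg (mul_nonneg (by nlinarith : (0:ℝ) ≤ (p - 1) * (4 * p - 6)) (sq_nonneg (1 - v))) hA]
  -- second derivative nonneg on the right
  have h2pos : ∀ v : ℝ, 0 < v → 0 ≤ f'' v := by
    intro v hv
    have hv2 : (0:ℝ) < v ^ 2 := by positivity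
    have hBA : (v ^ 2) ^ (p - 1) = (v ^ 2) ^ (p - 2) * v ^ 2 := by
      rw [show p - 1 = p - 2 + 1 by ring, Real.rpow_add_one (ne_of_gt hv2)]
    have hA : 0 ≤ (v ^ 2) ^ (p - 2) := Real.rpow_nonneg (sq_nonneg v) _
    simp only [hf''_def, hBA]
    set A := (v ^ 2) ^ (p - 2) with hA_def
    -- f'' v = 2 + A * Q where Q = 2 v^2 - 8(p-1)v(1-v) + (p-1)(4p-6)(1-v)^2
    set Q : ℝ := 2 * v ^ 2 - 8 * (p - 1) * v * (1 - v) + (p - 1) * (4 * p - 6) * (1 - v) ^ 2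
      with hQ_def
    have hgoal : 2 + A * Q =
        2 + 2 * (A * v ^ 2) - 8 * (p - 1) * v * (1 - v) * A
          + (p - 1) * (4 * p - 6) * (1 - v) ^ 2 * A := by
      simp only [hQ_def]; ring
    rw [← hgoal]
    rcases le_or_gt 0 Q with hQ | hQ
    · nlinarith [mul_nonneg hA hQ]
    · -- Q < 0 forces v < 1
      have hv1 : v ≤ 1 := by
        by_contra hc
        push_neg at hc
        have : 0 ≤ Q := by
          simp only [hQ_def]
          nlinarith [mul_nonneg (mul_nonneg (by linarith : (0:ℝ) ≤ 8 * (p - 1)) hv.le)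
            (by linarith : (0:ℝ) ≤ v - 1),
            mul_nonneg (by nlinarith : (0:ℝ) ≤ (p - 1) * (4 * p - 6)) (sq_nonneg (1 - v))]
        linarith
      have hA1 : A ≤ 1 := Real.rpow_le_one (sq_nonneg v) (by nlinarith) (by linarith)
      -- A * Q ≥ Q since Q < 0 and A ≤ 1
      have hAQ : Q ≤ A * Q := by nlinarith [mul_nonneg (sub_nonneg.2 hA1) (neg_nonneg.2 hQ.le)]
      -- Q ≥ -2
      have hQ2 : -2 ≤ Q := by
        simp only [hQ_def]
        nlinarith [sq_nonneg ((2 * p - 1) * (2 * p * v - (2 * p - 2))), sq_nonneg (2 * p * v - (2 * p - 2))]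
      linarith
  -- monotonicity of f' on each half line
  have hm1 : MonotoneOn f' (Iio (0:ℝ)) := by
    apply monotoneOn_of_hasDerivWithinAt_nonneg (convex_Iio 0)
      (fun x hx => ((hderiv2 x (ne_of_lt hx)).continuousAt).continuousWithinAt)
      (f' := f'')
    · intro x hx
      rw [interior_Iio] at hx
      exact ((hderiv2 x (ne_of_lt hx)).hasDerivWithinAt)
    · intro x hx
      rw [interior_Iio] at hx
      exact h2neg x hx
  have hm2 : MonotoneOn f' (Ioi (0:ℝ)) := by
    apply monotoneOn_of_hasDerivWithinAt_nonneg (convex_Ioi 0)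
      (fun x hx => ((hderiv2 x (ne_of_gt hx)).continuousAt).continuousWithinAt)
      (f' := f'')
    · intro x hx
      rw [interior_Ioi] at hx
      exact ((hderiv2 x (ne_of_gt hx)).hasDerivWithinAt)
    · intro x hx
      rw [interior_Ioi] at hx
      exact h2pos x hx
  -- glue
  have hmono : Monotone f' := by
    intro a b hab
    rcases lt_trichotomy a 0 with ha | ha | ha
    · rcases lt_trichotomy b 0 with hb | hb | hb
      · exact hm1 ha hb hab
      · rw [hb, hf'0]; exact hneg a ha.le
      · exact le_trans (hneg a ha.le) (hpos b hb.le)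
    · rw [ha, hf'0]; exact hpos b (by linarith)
    · exact hm2 ha (lt_of_lt_of_le ha hab) hab
  rw [hEq]
  have hdiff : Differentiable ℝ f := fun v => (hderiv v).differentiableAt
  have hderiv_eq : deriv f = f' := funext fun v => (hderiv v).deriv
  exact Monotone.convexOn_univ_of_deriv hdiff (hderiv_eq ▸ hmono)
end

section
/- For nonnegative reals a and b and p ≥ 2, |a - b|·√(a^(2p-2) + b^(2p-2)) ≤ √2 · |a^p - b^p|. -/
/-!
By symmetry assume `b ≤ a`. Then `a^(2p-2) + b^(2p-2) ≤ 2 (a^(p-1))²`, so the left side is at most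
`√2 (a - b) a^(p-1)`, and `(a - b) a^(p-1) ≤ a·a^(p-1) - b·b^(p-1) = a^p - b^p` because `x ↦ x^(p-1)`
is monotone.
-/

open Real

lemma sqrt_sq_add_sq_le_sqrt_two_mul {x y : ℝ} (hy : 0 ≤ y) (hyx : y ≤ x) :
    √(x ^ 2 + y ^ 2) ≤ √2 * x := by
  have hx : 0 ≤ x := hy.trans hyx
  calc √(x ^ 2 + y ^ 2) ≤ √(2 * x ^ 2) := sqrt_le_sqrt (by nlinarith)
    _ = √2 * x := by rw [sqrt_mul zero_le_two, sqrt_sq hx]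

lemma rpow_two_mul_sub_two {a : ℝ} (ha : 0 ≤ a) (p : ℝ) :
    a ^ (2 * p - 2) = (a ^ (p - 1)) ^ 2 := by
  rw [← rpow_mul_natCast ha]
  ring_nf

lemma rpow_eq_mul_rpow_sub_one {a p : ℝ} (ha : 0 ≤ a) (hp : p ≠ 0) :
    a ^ p = a * a ^ (p - 1) := by
  conv_lhs => rw [← sub_add_cancel p 1]
  rw [rpow_add_one' ha (by simpa using hp), mul_comm]

lemma sub_mul_rpow_sub_one_le_rpow_sub_rpow {a b p : ℝ} (hb : 0 ≤ b) (hba : b ≤ a)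
    (hp : 1 ≤ p) : (a - b) * a ^ (p - 1) ≤ a ^ p - b ^ p := by
  have hp0 : p ≠ 0 := by positivity
  have hmono : b ^ (p - 1) ≤ a ^ (p - 1) := rpow_le_rpow hb hba (by linarith)
  rw [rpow_eq_mul_rpow_sub_one (hb.trans hba) hp0, rpow_eq_mul_rpow_sub_one hb hp0]
  nlinarith [mul_le_mul_of_nonneg_left hmono hb]

lemma sub_mul_sqrt_rpow_add_rpow_le_of_le {a b p : ℝ} (hb : 0 ≤ b) (hba : b ≤ a) (hp : 1 ≤ p) :
    (a - b) * √(a ^ (2 * p - 2) + b ^ (2 * p - 2)) ≤ √2 * (a ^ p - b ^ p) := by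
  have hmono : b ^ (p - 1) ≤ a ^ (p - 1) := rpow_le_rpow hb hba (by linarith)
  have hsqrt : √(a ^ (2 * p - 2) + b ^ (2 * p - 2)) ≤ √2 * a ^ (p - 1) := by
    rw [rpow_two_mul_sub_two (hb.trans hba), rpow_two_mul_sub_two hb]
    exact sqrt_sq_add_sq_le_sqrt_two_mul (by positivity) hmono
  calc (a - b) * √(a ^ (2 * p - 2) + b ^ (2 * p - 2))
      ≤ (a - b) * (√2 * a ^ (p - 1)) := mul_le_mul_of_nonneg_left hsqrt (by linarith)
    _ = √2 * ((a - b) * a ^ (p - 1)) := by ring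
    _ ≤ √2 * (a ^ p - b ^ p) := mul_le_mul_of_nonneg_left
        (sub_mul_rpow_sub_one_le_rpow_sub_rpow hb hba hp) (sqrt_nonneg 2)

theorem stmt4 (a b p : ℝ) (ha : 0 ≤ a) (hb : 0 ≤ b) (hp : 2 ≤ p) :
    |a - b| * Real.sqrt (a ^ (2 * p - 2) + b ^ (2 * p - 2)) ≤ Real.sqrt 2 * |a ^ p - b ^ p| := by
  have hp1 : 1 ≤ p := by linarith
  rcases le_total b a with hba | hab
  · rw [abs_of_nonneg (sub_nonneg.2 hba),
      abs_of_nonneg (sub_nonneg.2 (rpow_le_rpow hb hba (by linarith)))]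
    exact sub_mul_sqrt_rpow_add_rpow_le_of_le hb hba hp1
  · rw [abs_sub_comm, abs_sub_comm (a ^ p), add_comm, abs_of_nonneg (sub_nonneg.2 hab),
      abs_of_nonneg (sub_nonneg.2 (rpow_le_rpow ha hab (by linarith)))]
    exact sub_mul_sqrt_rpow_add_rpow_le_of_le ha hab hp1
end

section
/- With the quasi-metric d(y,ȳ)^2 = Σ_{j=1}^m |⟨X_j, y−ȳ⟩|^2 (|⟨X_j,y⟩|^{2(p−1)} + |⟨X_j,ȳ⟩|^{2(p−1)}) on ℝ^n (X_1,…,X_m fixed, p ≥ 2), for all x, y, z ∈ ℝ^n one has d(x, (y+z)/2)^2 ≤ (d(x,y)^2 + d(x,z)^2)/2; in particular, balls of d centered at any point are convex. -/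
open Real Set

private lemma bern11 {q t v : ℝ} (hq : 1 ≤ q) (ht : 0 < t) (hv : 0 ≤ v) :
    t ^ q + q * t ^ (q - 1) * v ≤ (t + v) ^ q := by
  have h := one_add_mul_self_le_rpow_one_add (s := v / t) (by have := div_nonneg hv ht.le; linarith) hq
  have h2 : (t + v) ^ q = t ^ q * (1 + v / t) ^ q := by
    rw [← Real.mul_rpow ht.le (by positivity)]
    congr 1
    field_simp
  have h3 : t ^ q + q * t ^ (q - 1) * v = t ^ q * (1 + q * (v / t)) := by
    rw [Real.rpow_sub ht, Real.rpow_one]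
    ring
  rw [h2, h3]
  exact mul_le_mul_of_nonneg_left h (Real.rpow_nonneg ht.le q)

private lemma key_pos11 {q : ℝ} (hq : 2 ≤ q) (a t : ℝ) (ht : 0 < t) :
    0 ≤ 2 * ((t ^ 2) ^ (q / 2) + (a ^ 2) ^ (q / 2))
      + (4 * q * t * (t - a) + q * (q - 1) * (t - a) ^ 2) * (t ^ 2) ^ (q / 2 - 1) := by
  have h1 : (t ^ 2 : ℝ) ^ (q / 2) = t ^ q := by
    rw [← Real.rpow_natCast t 2, ← Real.rpow_mul ht.le]
    congr 1; push_cast; ring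
  have h2 : (t ^ 2 : ℝ) ^ (q / 2 - 1) = t ^ (q - 2) := by
    rw [← Real.rpow_natCast t 2, ← Real.rpow_mul ht.le]
    congr 1; push_cast; ring
  have htq2 : (0:ℝ) < t ^ (q - 2) := Real.rpow_pos_of_pos ht _
  have htq : t ^ q = t ^ (q - 2) * t ^ 2 := by
    rw [← Real.rpow_natCast t 2, ← Real.rpow_add ht]
    congr 1; push_cast; ring
  have htq1 : t ^ (q - 1) = t ^ (q - 2) * t := by
    nth_rewrite 3 [← Real.rpow_one t]
    rw [← Real.rpow_add ht]
    congr 1; ring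
  rw [h1, h2, htq]
  rcases le_or_gt a t with hat | hat
  · have h3 : (0:ℝ) ≤ (a ^ 2) ^ (q / 2) := Real.rpow_nonneg (by positivity) _
    have h4 : (0:ℝ) ≤ t - a := by linarith
    have h5 : (0:ℝ) ≤ 4 * q * t * (t - a) := by positivity
    have h6 : (0:ℝ) ≤ q * (q - 1) * (t - a) ^ 2 :=
      mul_nonneg (mul_nonneg (by linarith) (by linarith)) (sq_nonneg _)
    nlinarith [mul_nonneg (by linarith : (0:ℝ) ≤ 4 * q * t * (t - a) + q * (q - 1) * (t - a) ^ 2)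
      htq2.le, mul_nonneg (mul_nonneg htq2.le ht.le) ht.le]
  · have ha0 : (0:ℝ) < a := by linarith
    have ha : (a ^ 2 : ℝ) ^ (q / 2) = a ^ q := by
      rw [← Real.rpow_natCast a 2, ← Real.rpow_mul ha0.le]
      congr 1; push_cast; ring
    rw [ha]
    have hb : t ^ q + q * t ^ (q - 1) * (a - t) ≤ (t + (a - t)) ^ q :=
      bern11 (by linarith) ht (by linarith)
    rw [show t + (a - t) = a by ring] at hb
    rw [htq, htq1] at hb
    have hquad : (0:ℝ) ≤ 4 * t ^ 2 - 2 * q * t * (a - t) + q * (q - 1) * (a - t) ^ 2 := by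
      nlinarith [sq_nonneg (q * (a - t) - 2 * t),
        mul_nonneg (mul_nonneg (by linarith : (0:ℝ) ≤ q) (sq_nonneg (a - t)))
          (by linarith : (0:ℝ) ≤ q - 2), sq_nonneg t]
    nlinarith [hb, mul_nonneg hquad htq2.le]

private lemma key11 {q : ℝ} (hq : 2 ≤ q) (a t : ℝ) (ht : t ≠ 0) :
    0 ≤ 2 * ((t ^ 2) ^ (q / 2) + (a ^ 2) ^ (q / 2))
      + (4 * q * t * (t - a) + q * (q - 1) * (t - a) ^ 2) * (t ^ 2) ^ (q / 2 - 1) := by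
  rcases ht.lt_or_gt with h | h
  · have h2 := key_pos11 hq (-a) (-t) (by linarith)
    simp only [neg_sq] at h2
    convert h2 using 1
    ring
  · exact key_pos11 hq a t h


private lemma convexF11 {q : ℝ} (hq : 2 ≤ q) (a : ℝ) :
    ConvexOn ℝ univ (fun t : ℝ => (t - a) ^ 2 * ((t ^ 2) ^ (q / 2) + (a ^ 2) ^ (q / 2))) := by
  set c : ℝ := (a ^ 2) ^ (q / 2) with hc
  set F' : ℝ → ℝ := fun t =>
    2 * (t - a) * ((t ^ 2) ^ (q / 2) + c) + (t - a) ^ 2 * (q * t * (t ^ 2) ^ (q / 2 - 1)) with hF'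
  have hg : ∀ t : ℝ, HasDerivAt (fun t : ℝ => (t ^ 2) ^ (q / 2)) (q * t * (t ^ 2) ^ (q / 2 - 1)) t := by
    intro t
    have h := (hasDerivAt_pow 2 t).rpow_const (p := q / 2) (Or.inr (by linarith))
    convert h using 1
    push_cast; ring
  have hF : ∀ t : ℝ, HasDerivAt (fun t : ℝ => (t - a) ^ 2 * ((t ^ 2) ^ (q / 2) + c)) (F' t) t := by
    intro t
    have h1 : HasDerivAt (fun t : ℝ => (t - a) ^ 2) (2 * (t - a)) t := by
      have := ((hasDerivAt_id t).sub_const a).pow 2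
      convert this using 1 <;> first | rfl | (simp only [id_eq] <;> push_cast <;> ring)
    have h2 := (hg t).add_const c
    convert h1.mul h2 using 1
    all_goals first | rfl | (simp only [hF']; ring)
  have hF'' : ∀ t : ℝ, t ≠ 0 → HasDerivAt F'
      (2 * ((t ^ 2) ^ (q / 2) + c)
        + (4 * q * t * (t - a) + q * (q - 1) * (t - a) ^ 2) * (t ^ 2) ^ (q / 2 - 1)) t := by
    intro t ht
    have hA : HasDerivAt (fun t : ℝ => (t ^ 2) ^ (q / 2 - 1)) ((q - 2) * t * (t ^ 2) ^ (q / 2 - 2)) t := by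
      have h := (hasDerivAt_pow 2 t).rpow_const (p := q / 2 - 1) (Or.inl (pow_ne_zero 2 ht))
      convert h using 1
      push_cast; ring
    have hH : HasDerivAt (fun t : ℝ => q * t * (t ^ 2) ^ (q / 2 - 1))
        (q * ((t ^ 2) ^ (q / 2 - 1) + t * ((q - 2) * t * (t ^ 2) ^ (q / 2 - 2)))) t := by
      have := ((hasDerivAt_id t).mul hA).const_mul q
      convert this using 1
      all_goals first
        | rfl
        | (funext s; simp only [id_eq, Pi.mul_apply]; ring)
        | (simp only [id_eq]; push_cast; ring)
        | (push_cast; ring)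
    have h1 : HasDerivAt (fun t : ℝ => 2 * (t - a) * ((t ^ 2) ^ (q / 2) + c))
        (2 * ((t ^ 2) ^ (q / 2) + c) + 2 * (t - a) * (q * t * (t ^ 2) ^ (q / 2 - 1))) t := by
      have hl : HasDerivAt (fun t : ℝ => 2 * (t - a)) 2 t := by
        have := ((hasDerivAt_id t).sub_const a).const_mul 2
        convert this using 1
        all_goals first
          | rfl
          | (funext s; simp only [id_eq]; ring)
          | (simp only [id_eq]; push_cast; ring)
          | (push_cast; ring)
      have := hl.mul ((hg t).add_const c)
      convert this using 1
      all_goals first | rfl | ring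
    have h2 : HasDerivAt (fun t : ℝ => (t - a) ^ 2 * (q * t * (t ^ 2) ^ (q / 2 - 1)))
        (2 * (t - a) * (q * t * (t ^ 2) ^ (q / 2 - 1))
          + (t - a) ^ 2 * (q * ((t ^ 2) ^ (q / 2 - 1) + t * ((q - 2) * t * (t ^ 2) ^ (q / 2 - 2))))) t := by
      have hl : HasDerivAt (fun t : ℝ => (t - a) ^ 2) (2 * (t - a)) t := by
        have := ((hasDerivAt_id t).sub_const a).pow 2
        convert this using 1 <;> first | rfl | (simp only [id_eq] <;> push_cast <;> ring)
      exact hl.mul hH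
    have hsum := h1.add h2
    have hre : (t ^ 2 : ℝ) ^ (q / 2 - 1) = (t ^ 2) ^ (q / 2 - 2) * t ^ 2 := by
      rw [show q / 2 - 1 = (q / 2 - 2) + 1 by ring, Real.rpow_add_one (pow_ne_zero 2 ht)]
    convert hsum using 1
    all_goals first | rfl | (rw [hre]; ring)
  have hcont : Continuous F' := by
    have c1 : Continuous fun t : ℝ => (t ^ 2 : ℝ) ^ (q / 2) :=
      (continuous_pow 2).rpow_const fun t => Or.inr (by linarith)
    have c2 : Continuous fun t : ℝ => (t ^ 2 : ℝ) ^ (q / 2 - 1) :=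
      (continuous_pow 2).rpow_const fun t => Or.inr (by linarith)
    simp only [hF']
    exact (((continuous_const.mul (continuous_id.sub continuous_const)).mul
      (c1.add continuous_const))).add (((continuous_id.sub continuous_const).pow 2).mul
      ((continuous_const.mul continuous_id).mul c2))
  have hIci : MonotoneOn F' (Ici (0:ℝ)) := by
    apply monotoneOn_of_deriv_nonneg (convex_Ici 0) hcont.continuousOn
    · intro t ht
      rw [interior_Ici] at ht
      exact ((hF'' t (ne_of_gt ht)).differentiableAt).differentiableWithinAt
    · intro t ht
      rw [interior_Ici] at ht
      rw [(hF'' t (ne_of_gt ht)).deriv]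
      exact key11 hq a t (ne_of_gt ht)
  have hIic : MonotoneOn F' (Iic (0:ℝ)) := by
    apply monotoneOn_of_deriv_nonneg (convex_Iic 0) hcont.continuousOn
    · intro t ht
      rw [interior_Iic] at ht
      exact ((hF'' t (ne_of_lt ht)).differentiableAt).differentiableWithinAt
    · intro t ht
      rw [interior_Iic] at ht
      rw [(hF'' t (ne_of_lt ht)).deriv]
      exact key11 hq a t (ne_of_lt ht)
  have hmono : Monotone F' := by
    intro s t hst
    rcases le_total t 0 with h | h
    · exact hIic (le_trans hst h) h hst
    rcases le_total 0 s with h' | h'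
    · exact hIci h' h hst
    · have e1 : F' s ≤ F' 0 := hIic (mem_Iic.mpr h') (mem_Iic.mpr le_rfl) h'
      have e2 : F' 0 ≤ F' t := hIci (mem_Ici.mpr le_rfl) (mem_Ici.mpr h) h
      linarith
  apply Monotone.convexOn_univ_of_deriv
  · exact fun t => (hF t).differentiableAt
  · have hd : deriv (fun t : ℝ => (t - a) ^ 2 * ((t ^ 2) ^ (q / 2) + c)) = F' :=
      funext fun t => (hF t).deriv
    rw [hd]
    exact hmono

private lemma abs_rpow_eq11 (s q : ℝ) : |s| ^ q = (s ^ 2) ^ (q / 2) := by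
  rw [← sq_abs s, ← Real.rpow_natCast |s| 2, ← Real.rpow_mul (abs_nonneg s)]
  congr 1; push_cast; ring

theorem stmt11 (n m : ℕ) (p : ℝ) (hp : 2 ≤ p)
    (X : Fin m → EuclideanSpace ℝ (Fin n))
    (d : EuclideanSpace ℝ (Fin n) → EuclideanSpace ℝ (Fin n) → ℝ)
    (hd : ∀ y z, d y z = Real.sqrt (∑ j, |(inner ℝ (X j) (y - z) : ℝ)| ^ 2 *
        (|(inner ℝ (X j) y : ℝ)| ^ (2 * (p - 1)) + |(inner ℝ (X j) z : ℝ)| ^ (2 * (p - 1))))) :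
    (∀ x y z : EuclideanSpace ℝ (Fin n),
        d x ((2:ℝ)⁻¹ • (y + z)) ^ 2 ≤ (d x y ^ 2 + d x z ^ 2) / 2) ∧
    (∀ (x : EuclideanSpace ℝ (Fin n)) (ρ : ℝ), Convex ℝ {y | d x y ≤ ρ}) := by
  set q : ℝ := 2 * (p - 1) with hqdef
  have hq : 2 ≤ q := by rw [hqdef]; linarith
  -- the sum as a function of the second variable
  set S : EuclideanSpace ℝ (Fin n) → EuclideanSpace ℝ (Fin n) → ℝ := fun x y =>
    ∑ j, ((inner ℝ (X j) y : ℝ) - (inner ℝ (X j) x : ℝ)) ^ 2 *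
      ((((inner ℝ (X j) y : ℝ)) ^ 2) ^ (q / 2) + (((inner ℝ (X j) x : ℝ)) ^ 2) ^ (q / 2)) with hSdef
  have hSeq : ∀ x y : EuclideanSpace ℝ (Fin n),
      (∑ j, |(inner ℝ (X j) (x - y) : ℝ)| ^ 2 *
        (|(inner ℝ (X j) x : ℝ)| ^ q + |(inner ℝ (X j) y : ℝ)| ^ q)) = S x y := by
    intro x y
    refine Finset.sum_congr rfl fun j _ => ?_
    rw [inner_sub_right, sq_abs, abs_rpow_eq11, abs_rpow_eq11]
    ring
  have hS0 : ∀ x y, 0 ≤ S x y := by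
    intro x y
    refine Finset.sum_nonneg fun j _ => mul_nonneg (sq_nonneg _) ?_
    exact add_nonneg (Real.rpow_nonneg (sq_nonneg _) _) (Real.rpow_nonneg (sq_nonneg _) _)
  have hd2 : ∀ x y, d x y ^ 2 = S x y := by
    intro x y
    rw [hd, hSeq]
    exact Real.sq_sqrt (hS0 x y)
  have hdS : ∀ x y, d x y = Real.sqrt (S x y) := by
    intro x y; rw [hd, hSeq]
  have hconv : ∀ x : EuclideanSpace ℝ (Fin n), ConvexOn ℝ univ (S x) := by
    intro x
    have hterm : ∀ j : Fin m, ConvexOn ℝ univ (fun y : EuclideanSpace ℝ (Fin n) =>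
        ((inner ℝ (X j) y : ℝ) - (inner ℝ (X j) x : ℝ)) ^ 2 *
          ((((inner ℝ (X j) y : ℝ)) ^ 2) ^ (q / 2) + (((inner ℝ (X j) x : ℝ)) ^ 2) ^ (q / 2))) := by
      intro j
      have hc := (convexF11 hq ((inner ℝ (X j) x : ℝ))).comp_affineMap
        ((innerSL ℝ (X j)).toLinearMap.toAffineMap)
      exact hc
    have hsum : ∀ s : Finset (Fin m), ConvexOn ℝ univ (fun y : EuclideanSpace ℝ (Fin n) =>
        ∑ j ∈ s, ((inner ℝ (X j) y : ℝ) - (inner ℝ (X j) x : ℝ)) ^ 2 *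
          ((((inner ℝ (X j) y : ℝ)) ^ 2) ^ (q / 2) + (((inner ℝ (X j) x : ℝ)) ^ 2) ^ (q / 2))) := by
      intro s
      induction s using Finset.induction with
      | empty => simpa using convexOn_const (0:ℝ) convex_univ
      | insert _ _ hj ih =>
        simp only [Finset.sum_insert hj]
        exact (hterm _).add ih
    exact hsum Finset.univ
  constructor
  · intro x y z
    have h := (hconv x).2 (mem_univ y) (mem_univ z)
      (by norm_num : (0:ℝ) ≤ 1/2) (by norm_num : (0:ℝ) ≤ 1/2) (by norm_num)
    have hmid : (2:ℝ)⁻¹ • (y + z) = (1/2 : ℝ) • y + (1/2 : ℝ) • z := by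
      rw [smul_add]; norm_num
    simp only [smul_eq_mul] at h
    rw [hd2, hd2, hd2, hmid]
    linarith [h]
  · intro x ρ
    rcases lt_or_ge ρ 0 with hρ | hρ
    · have : {y : EuclideanSpace ℝ (Fin n) | d x y ≤ ρ} = ∅ := by
        ext y
        simp only [mem_setOf_eq, mem_empty_iff_false, iff_false, not_le]
        calc ρ < 0 := hρ
          _ ≤ d x y := by rw [hdS]; exact Real.sqrt_nonneg _
      rw [this]
      exact convex_empty
    · have hset : {y : EuclideanSpace ℝ (Fin n) | d x y ≤ ρ}
          = {y ∈ univ | S x y ≤ ρ ^ 2} := by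
        ext y
        simp only [mem_setOf_eq, mem_sep_iff, mem_univ, true_and]
        rw [hdS]
        constructor
        · intro h
          have := Real.sq_sqrt (hS0 x y)
          nlinarith [Real.sqrt_nonneg (S x y)]
        · intro h
          calc Real.sqrt (S x y) ≤ Real.sqrt (ρ ^ 2) := Real.sqrt_le_sqrt h
            _ = ρ := Real.sqrt_sq hρ
      rw [hset]
      exact (hconv x).convex_le (ρ ^ 2)
end

section
/- With the quasi-metric d(y,ȳ)^2 = Σ_{j=1}^m |⟨X_j, y−ȳ⟩|^2 (|⟨X_j,y⟩|^{2(p−1)} + |⟨X_j,ȳ⟩|^{2(p−1)}) and p ≥ 2, for any points u_1,…,u_N ∈ ℝ^n one has d(u_1, u_N) ≤ 2p · Σ_{i=1}^{N−1} d(u_i, u_{i+1}). -/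
lemma bern_aux {q a b : ℝ} (hq : 1 ≤ q) (hb : 0 ≤ b) (hba : b ≤ a) :
    |a| ^ q * a - |b| ^ q * b ≤ (q + 1) * ((a - b) * |a| ^ q) := by
  have ha : 0 ≤ a := le_trans hb hba
  rw [abs_of_nonneg ha, abs_of_nonneg hb]
  rcases eq_or_lt_of_le hb with hb0 | hb0
  · subst b
    simp only [mul_zero, sub_zero]
    have h1 : (0:ℝ) ≤ a * a ^ q := mul_nonneg ha (Real.rpow_nonneg ha q)
    nlinarith [Real.rpow_nonneg ha q]
  · have ha0 : 0 < a := lt_of_lt_of_le hb0 hba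
    have hs : (-1:ℝ) ≤ b / a - 1 := by
      have : 0 ≤ b / a := div_nonneg hb ha0.le
      linarith
    have hber := one_add_mul_self_le_rpow_one_add hs (by linarith : (1:ℝ) ≤ q + 1)
    have h1 : (1 : ℝ) + (b / a - 1) = b / a := by ring
    rw [h1, Real.div_rpow hb ha0.le] at hber
    have hae : a ^ (q + 1) = a ^ q * a := Real.rpow_add_one (ne_of_gt ha0) q
    have hbe : b ^ (q + 1) = b ^ q * b := Real.rpow_add_one (ne_of_gt hb0) q
    rw [hae, hbe] at hber
    have hApos : 0 < a ^ q * a := mul_pos (Real.rpow_pos_of_pos ha0 q) ha0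
    have := mul_le_mul_of_nonneg_right hber hApos.le
    rw [div_mul_cancel₀ _ (ne_of_gt hApos)] at this
    have hda : (b / a) * (a ^ q * a) = b * a ^ q := by
      field_simp
    nlinarith [this]


lemma sq_rpow {x : ℝ} (hx : 0 ≤ x) (q : ℝ) : x ^ (2 * q) = (x ^ q) ^ 2 := by
  rw [show (2:ℝ) * q = q * 2 by ring, Real.rpow_mul hx, Real.rpow_two]

lemma ssA {q a b : ℝ} (hq : 1 ≤ q) (hb : 0 ≤ b) (hba : b ≤ a) :
    (a - b) ^ 2 * (a ^ (2*q) + b ^ (2*q)) ≤ 4 * (a ^ q * a - b ^ q * b) ^ 2 := by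
  have ha : 0 ≤ a := le_trans hb hba
  have hq0 : (0:ℝ) ≤ q := by linarith
  have hBA : b ^ q ≤ a ^ q := Real.rpow_le_rpow hb hba hq0
  have hB : 0 ≤ b ^ q := Real.rpow_nonneg hb q
  rw [sq_rpow ha, sq_rpow hb]
  have h1 : (a - b) * a ^ q ≤ a ^ q * a - b ^ q * b := by nlinarith
  have h0 : 0 ≤ (a - b) * a ^ q := mul_nonneg (by linarith) (by linarith)
  have h2 : ((a - b) * a ^ q) ^ 2 ≤ (a ^ q * a - b ^ q * b) ^ 2 :=
    pow_le_pow_left₀ h0 h1 2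
  have h4 : (a - b) ^ 2 * (b ^ q) ^ 2 ≤ (a - b) ^ 2 * (a ^ q) ^ 2 :=
    mul_le_mul_of_nonneg_left (pow_le_pow_left₀ hB hBA 2) (sq_nonneg _)
  nlinarith [h2, h4, sq_nonneg (a ^ q * a - b ^ q * b)]

lemma osA {q a c : ℝ} (hq : 1 ≤ q) (ha : 0 ≤ a) (hc : 0 ≤ c) :
    (a + c) ^ 2 * (a ^ (2*q) + c ^ (2*q)) ≤ 4 * (a ^ q * a + c ^ q * c) ^ 2 := by
  have hq0 : (0:ℝ) ≤ q := by linarith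
  have hA : 0 ≤ a ^ q := Real.rpow_nonneg ha q
  have hC : 0 ≤ c ^ q := Real.rpow_nonneg hc q
  rw [sq_rpow ha, sq_rpow hc]
  have rearr : a * c ^ q + c * a ^ q ≤ a * a ^ q + c * c ^ q := by
    rcases le_total a c with h | h
    · have := Real.rpow_le_rpow ha h hq0
      nlinarith
    · have := Real.rpow_le_rpow hc h hq0
      nlinarith
  have h2 : (a + c) * (a ^ q + c ^ q) ≤ 2 * (a ^ q * a + c ^ q * c) := by nlinarith
  have h0 : 0 ≤ (a + c) * (a ^ q + c ^ q) := mul_nonneg (by linarith) (by linarith)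
  have h3 : ((a + c) * (a ^ q + c ^ q)) ^ 2 ≤ (2 * (a ^ q * a + c ^ q * c)) ^ 2 :=
    pow_le_pow_left₀ h0 h2 2
  nlinarith [sq_nonneg (a ^ q - c ^ q), sq_nonneg (a + c), mul_nonneg (sq_nonneg (a+c)) (mul_nonneg hA hC)]

lemma ssB {q a b : ℝ} (hq : 1 ≤ q) (hb : 0 ≤ b) (hba : b ≤ a) :
    (a ^ q * a - b ^ q * b) ^ 2 ≤ (q+1)^2 * ((a - b) ^ 2 * (a ^ (2*q) + b ^ (2*q))) := by
  have ha : 0 ≤ a := le_trans hb hba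
  have hq0 : (0:ℝ) ≤ q := by linarith
  have hBA : b ^ q ≤ a ^ q := Real.rpow_le_rpow hb hba hq0
  have hB : 0 ≤ b ^ q := Real.rpow_nonneg hb q
  rw [sq_rpow ha, sq_rpow hb]
  have hber : a ^ q * a - b ^ q * b ≤ (q + 1) * ((a - b) * a ^ q) := by
    have := bern_aux hq hb hba
    rwa [abs_of_nonneg ha, abs_of_nonneg hb] at this
  have h0 : 0 ≤ a ^ q * a - b ^ q * b := by nlinarith [mul_le_mul hBA hba hb (by linarith : (0:ℝ) ≤ a ^ q)]
  have h2 : (a ^ q * a - b ^ q * b) ^ 2 ≤ ((q + 1) * ((a - b) * a ^ q)) ^ 2 :=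
    pow_le_pow_left₀ h0 hber 2
  nlinarith [mul_nonneg (mul_nonneg (sq_nonneg (q+1)) (sq_nonneg (a-b))) (mul_nonneg hB hB)]

lemma osB {q a c : ℝ} (hq : 1 ≤ q) (ha : 0 ≤ a) (hc : 0 ≤ c) :
    (a ^ q * a + c ^ q * c) ^ 2 ≤ (q+1)^2 * ((a + c) ^ 2 * (a ^ (2*q) + c ^ (2*q))) := by
  have hq0 : (0:ℝ) ≤ q := by linarith
  have hA : 0 ≤ a ^ q := Real.rpow_nonneg ha q
  have hC : 0 ≤ c ^ q := Real.rpow_nonneg hc q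
  rw [sq_rpow ha, sq_rpow hc]
  have h1 : a ^ q * a + c ^ q * c ≤ (a + c) * (a ^ q + c ^ q) := by nlinarith [mul_nonneg ha hC, mul_nonneg hc hA]
  have h0 : 0 ≤ a ^ q * a + c ^ q * c := by positivity
  have h2 : (a ^ q * a + c ^ q * c) ^ 2 ≤ ((a + c) * (a ^ q + c ^ q)) ^ 2 :=
    pow_le_pow_left₀ h0 h1 2
  have hq2 : 4 ≤ (q+1)^2 := by nlinarith
  nlinarith [sq_nonneg (a ^ q - c ^ q), sq_nonneg (a + c), mul_nonneg (sq_nonneg (a+c)) (add_nonneg (mul_nonneg hA hA) (mul_nonneg hC hC)), sq_nonneg ((a+c)*(a^q+c^q))]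
lemma keyA {q : ℝ} (hq : 1 ≤ q) (a b : ℝ) :
    (a - b) ^ 2 * (|a| ^ (2*q) + |b| ^ (2*q)) ≤ 4 * (|a| ^ q * a - |b| ^ q * b) ^ 2 := by
  rcases le_total 0 a with ha | ha <;> rcases le_total 0 b with hb | hb
  · rw [abs_of_nonneg ha, abs_of_nonneg hb]
    rcases le_total b a with h | h
    · exact ssA hq hb h
    · nlinarith [ssA hq ha h]
  · rw [abs_of_nonneg ha, abs_of_nonpos hb]
    nlinarith [osA hq ha (neg_nonneg.2 hb)]
  · rw [abs_of_nonpos ha, abs_of_nonneg hb]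
    nlinarith [osA hq hb (neg_nonneg.2 ha)]
  · rw [abs_of_nonpos ha, abs_of_nonpos hb]
    rcases le_total b a with h | h
    · nlinarith [ssA hq (neg_nonneg.2 ha) (neg_le_neg h)]
    · nlinarith [ssA hq (neg_nonneg.2 hb) (neg_le_neg h)]

lemma keyB {q : ℝ} (hq : 1 ≤ q) (a b : ℝ) :
    (|a| ^ q * a - |b| ^ q * b) ^ 2 ≤
      (q+1)^2 * ((a - b) ^ 2 * (|a| ^ (2*q) + |b| ^ (2*q))) := by
  rcases le_total 0 a with ha | ha <;> rcases le_total 0 b with hb | hb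
  · rw [abs_of_nonneg ha, abs_of_nonneg hb]
    rcases le_total b a with h | h
    · exact ssB hq hb h
    · nlinarith [ssB hq ha h]
  · rw [abs_of_nonneg ha, abs_of_nonpos hb]
    nlinarith [osB hq ha (neg_nonneg.2 hb)]
  · rw [abs_of_nonpos ha, abs_of_nonneg hb]
    nlinarith [osB hq hb (neg_nonneg.2 ha)]
  · rw [abs_of_nonpos ha, abs_of_nonpos hb]
    rcases le_total b a with h | h
    · nlinarith [ssB hq (neg_nonneg.2 ha) (neg_le_neg h)]
    · nlinarith [ssB hq (neg_nonneg.2 hb) (neg_le_neg h)]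
noncomputable def Fmap {n m : ℕ} (q : ℝ) (X : Fin m → EuclideanSpace ℝ (Fin n))
    (y : EuclideanSpace ℝ (Fin n)) : EuclideanSpace ℝ (Fin m) :=
  WithLp.toLp 2 (fun j => |(inner ℝ (X j) y : ℝ)| ^ q * (inner ℝ (X j) y : ℝ))

lemma dist_Fmap {n m : ℕ} (q : ℝ) (X : Fin m → EuclideanSpace ℝ (Fin n))
    (y z : EuclideanSpace ℝ (Fin n)) :
    dist (Fmap q X y) (Fmap q X z) = Real.sqrt (∑ j,
      (|(inner ℝ (X j) y : ℝ)| ^ q * (inner ℝ (X j) y : ℝ) -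
        |(inner ℝ (X j) z : ℝ)| ^ q * (inner ℝ (X j) z : ℝ)) ^ 2) := by
  rw [EuclideanSpace.dist_eq]
  congr 1
  refine Finset.sum_congr rfl fun j _ => ?_
  rw [show Fmap q X y j = |(inner ℝ (X j) y : ℝ)| ^ q * (inner ℝ (X j) y : ℝ) from rfl,
    show Fmap q X z j = |(inner ℝ (X j) z : ℝ)| ^ q * (inner ℝ (X j) z : ℝ) from rfl,
    Real.dist_eq, sq_abs]

theorem stmt12 (n m : ℕ) (p : ℝ) (hp : 2 ≤ p)
    (X : Fin m → EuclideanSpace ℝ (Fin n))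
    (d : EuclideanSpace ℝ (Fin n) → EuclideanSpace ℝ (Fin n) → ℝ)
    (hd : ∀ y z, d y z = Real.sqrt (∑ j, |(inner ℝ (X j) (y - z) : ℝ)| ^ 2 *
        (|(inner ℝ (X j) y : ℝ)| ^ (2 * (p - 1)) + |(inner ℝ (X j) z : ℝ)| ^ (2 * (p - 1)))))
    (N : ℕ) (hN : 1 ≤ N) (u : ℕ → EuclideanSpace ℝ (Fin n)) :
    d (u 0) (u (N - 1)) ≤ 2 * p * ∑ i ∈ Finset.range (N - 1), d (u i) (u (i + 1)) := by
  have hq : (1:ℝ) ≤ p - 1 := by linarith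
  set q : ℝ := p - 1 with hqdef
  have hsqrt4 : Real.sqrt 4 = 2 := by
    rw [show (4:ℝ) = 2^2 by norm_num, Real.sqrt_sq (by norm_num : (0:ℝ) ≤ 2)]
  -- d y z ≤ 2 * dist (Fmap q X y) (Fmap q X z)
  have hd2 : ∀ y z, d y z ≤ 2 * dist (Fmap q X y) (Fmap q X z) := by
    intro y z
    rw [hd, dist_Fmap]
    have hsum : (∑ j, |(inner ℝ (X j) (y - z) : ℝ)| ^ 2 *
        (|(inner ℝ (X j) y : ℝ)| ^ (2 * q) + |(inner ℝ (X j) z : ℝ)| ^ (2 * q))) ≤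
        4 * ∑ j, (|(inner ℝ (X j) y : ℝ)| ^ q * (inner ℝ (X j) y : ℝ) -
          |(inner ℝ (X j) z : ℝ)| ^ q * (inner ℝ (X j) z : ℝ)) ^ 2 := by
      rw [Finset.mul_sum]
      refine Finset.sum_le_sum fun j _ => ?_
      rw [inner_sub_right, sq_abs]
      exact keyA hq _ _
    calc Real.sqrt (∑ j, |(inner ℝ (X j) (y - z) : ℝ)| ^ 2 *
          (|(inner ℝ (X j) y : ℝ)| ^ (2 * q) + |(inner ℝ (X j) z : ℝ)| ^ (2 * q)))
        ≤ Real.sqrt (4 * ∑ j, (|(inner ℝ (X j) y : ℝ)| ^ q * (inner ℝ (X j) y : ℝ) -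
            |(inner ℝ (X j) z : ℝ)| ^ q * (inner ℝ (X j) z : ℝ)) ^ 2) := Real.sqrt_le_sqrt hsum
      _ = 2 * Real.sqrt (∑ j, (|(inner ℝ (X j) y : ℝ)| ^ q * (inner ℝ (X j) y : ℝ) -
            |(inner ℝ (X j) z : ℝ)| ^ q * (inner ℝ (X j) z : ℝ)) ^ 2) := by
          rw [Real.sqrt_mul (by norm_num : (0:ℝ) ≤ 4), hsqrt4]
  -- dist (Fmap q X y) (Fmap q X z) ≤ p * d y z
  have hF2 : ∀ y z, dist (Fmap q X y) (Fmap q X z) ≤ p * d y z := by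
    intro y z
    rw [hd, dist_Fmap]
    have hp0 : (0:ℝ) ≤ p := by linarith
    have hsum : (∑ j, (|(inner ℝ (X j) y : ℝ)| ^ q * (inner ℝ (X j) y : ℝ) -
          |(inner ℝ (X j) z : ℝ)| ^ q * (inner ℝ (X j) z : ℝ)) ^ 2) ≤
        p ^ 2 * ∑ j, |(inner ℝ (X j) (y - z) : ℝ)| ^ 2 *
          (|(inner ℝ (X j) y : ℝ)| ^ (2 * q) + |(inner ℝ (X j) z : ℝ)| ^ (2 * q)) := by
      rw [Finset.mul_sum]
      refine Finset.sum_le_sum fun j _ => ?_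
      rw [inner_sub_right, sq_abs]
      have := keyB hq ((inner ℝ (X j) y : ℝ)) ((inner ℝ (X j) z : ℝ))
      have hqe : q + 1 = p := by rw [hqdef]; ring
      rwa [hqe] at this
    calc Real.sqrt (∑ j, (|(inner ℝ (X j) y : ℝ)| ^ q * (inner ℝ (X j) y : ℝ) -
          |(inner ℝ (X j) z : ℝ)| ^ q * (inner ℝ (X j) z : ℝ)) ^ 2)
        ≤ Real.sqrt (p ^ 2 * ∑ j, |(inner ℝ (X j) (y - z) : ℝ)| ^ 2 *
            (|(inner ℝ (X j) y : ℝ)| ^ (2 * q) + |(inner ℝ (X j) z : ℝ)| ^ (2 * q))) :=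
          Real.sqrt_le_sqrt hsum
      _ = p * Real.sqrt (∑ j, |(inner ℝ (X j) (y - z) : ℝ)| ^ 2 *
            (|(inner ℝ (X j) y : ℝ)| ^ (2 * q) + |(inner ℝ (X j) z : ℝ)| ^ (2 * q))) := by
          rw [Real.sqrt_mul (sq_nonneg p), Real.sqrt_sq hp0]
  calc d (u 0) (u (N - 1)) ≤ 2 * dist (Fmap q X (u 0)) (Fmap q X (u (N - 1))) := hd2 _ _
    _ ≤ 2 * ∑ i ∈ Finset.range (N - 1), dist (Fmap q X (u i)) (Fmap q X (u (i + 1))) := by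
        have := dist_le_range_sum_dist (fun i => Fmap q X (u i)) (N - 1)
        linarith
    _ ≤ 2 * ∑ i ∈ Finset.range (N - 1), p * d (u i) (u (i + 1)) := by
        have := Finset.sum_le_sum (fun i (_ : i ∈ Finset.range (N-1)) => hF2 (u i) (u (i+1)))
        linarith
    _ = 2 * p * ∑ i ∈ Finset.range (N - 1), d (u i) (u (i + 1)) := by
        rw [Finset.mul_sum, Finset.mul_sum]
        exact Finset.sum_congr rfl fun i _ => by ring
end
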